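/- arXiv:2010.00335 — 2 statements merged into one kernel-verified Lean document; each statement's English description precedes it below -/
import Mathlib

section
/- Let N be a Nijenhuis operator on a left-symmetric Rinehart algebra (L,A,·,ℓ), i.e. N is A-linear and N(x)·N(y) − N(x·N(y)) − N(N(x)·y) + N²(x·y) = 0. Define x·_N y = x·N(y) + N(x)·y − N(x·y) and ℓ_N = ℓ∘N. Then (L,A,·_N,ℓ_N) is a left-symmetric Rinehart algebra. -/
/-!
The Nijenhuis identity says exactly that `N (x ·_N y) = N x · N y`. Expanding the associator of
`·_N` with this rule writes it as a signed sum of associators of `·` evaluated at `x, y, z` and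
their images under `N`, in a form that is symmetric in `x, y` term by term once `·` is
left-symmetric. The Rinehart axioms for `(·_N, ℓ ∘ N)` follow from those of `(·, ℓ)` and the
`A`-linearity of `N`.
-/

section Deformation

variable {K L : Type*} [CommSemiring K] [AddCommGroup L] [Module K L]

def deformedMul (m : L →ₗ[K] L →ₗ[K] L) (N : L →ₗ[K] L) (x y : L) : L :=
  m x (N y) + m (N x) y - N (m x y)

def opAssociator (μ : L → L → L) (x y z : L) : L :=
  μ (μ x y) z - μ x (μ y z)

def IsNijenhuis (m : L →ₗ[K] L →ₗ[K] L) (N : L →ₗ[K] L) : Prop :=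
  ∀ x y, m (N x) (N y) - N (m x (N y)) - N (m (N x) y) + N (N (m x y)) = 0

def IsLeftSymmetric (μ : L → L → L) : Prop :=
  ∀ x y z, opAssociator μ x y z = opAssociator μ y x z

variable {m : L →ₗ[K] L →ₗ[K] L} {N : L →ₗ[K] L}

theorem map_deformedMul (hN : IsNijenhuis m N) (x y : L) :
    N (deformedMul m N x y) = m (N x) (N y) := by
  simp only [deformedMul, map_add, map_sub]
  linear_combination (norm := abel) - hN x y

theorem opAssociator_deformedMul (hN : IsNijenhuis m N) (x y z : L) :
    opAssociator (deformedMul m N) x y z =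
      opAssociator (m · ·) x (N y) (N z) + opAssociator (m · ·) (N x) y (N z)
        + opAssociator (m · ·) (N x) (N y) z
        - N (opAssociator (m · ·) x (N y) z) - N (opAssociator (m · ·) x y (N z))
        - N (opAssociator (m · ·) (N x) y z) + N (N (opAssociator (m · ·) x y z)) := by
  have hNx : m x (m (N y) (N z)) - m x (N (m y (N z))) - m x (N (m (N y) z))
      + m x (N (N (m y z))) = 0 := by
    simpa only [map_add, map_sub, map_zero] using congrArg (m x) (hN y z)
  have hmul : deformedMul m N (deformedMul m N x y) z =
      m (deformedMul m N x y) (N z) + m (m (N x) (N y)) z - N (m (deformedMul m N x y) z) := by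
    rw [deformedMul, map_deformedMul hN]
  rw [opAssociator, hmul]
  simp only [opAssociator, deformedMul, map_add, map_sub, LinearMap.add_apply, LinearMap.sub_apply]
  linear_combination (norm := abel) - hN (m x y) z + hN x (m y z) + hNx

theorem IsLeftSymmetric.deformedMul (hls : IsLeftSymmetric (m · ·)) (hN : IsNijenhuis m N) :
    IsLeftSymmetric (deformedMul m N) := by
  intro x y z
  rw [opAssociator_deformedMul hN, opAssociator_deformedMul hN, hls x (N y), hls (N x) y,
    hls (N x) (N y), hls x (N y) z, hls x y (N z), hls (N x) y z, hls x y z]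
  abel

end Deformation

section Rinehart

variable {K A L : Type*} [CommSemiring K] [CommRing A]
  [AddCommGroup L] [Module K L] [Module A L] {m : L →ₗ[K] L →ₗ[K] L} {N : L →ₗ[K] L}

theorem deformedMul_smul_left (hNA : ∀ (a : A) x, N (a • x) = a • N x)
    (hc2 : ∀ (a : A) x y, m (a • x) y = a • m x y) (a : A) (x y : L) :
    deformedMul m N (a • x) y = a • deformedMul m N x y := by
  simp only [deformedMul, hNA, hc2]
  module

theorem deformedMul_smul_right [Algebra K A] {ℓ : L →ₗ[K] A →ₗ[K] A}
    (hNA : ∀ (a : A) x, N (a • x) = a • N x)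
    (hc1 : ∀ x (a : A) y, m x (a • y) = ℓ x a • y + a • m x y) (x : L) (a : A) (y : L) :
    deformedMul m N x (a • y) = ℓ (N x) a • y + a • deformedMul m N x y := by
  simp only [deformedMul, hc1, hNA, map_add]
  module

end Rinehart

theorem nijenhuis_deformed_leftSymmetricRinehart_general
    {K A L : Type*} [Field K] [CommRing A] [Algebra K A]
    [AddCommGroup L] [Module K L] [Module A L]
    (m : L →ₗ[K] L →ₗ[K] L) (ℓ : L →ₗ[K] A →ₗ[K] A) (N : L →ₗ[K] L)
    -- left-symmetric Rinehart axioms for (L, A, m, ℓ)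
    (hls : ∀ x y z : L, m (m x y) z - m x (m y z) = m (m y x) z - m y (m x z))
    (hder : ∀ (x : L) (a b : A), ℓ x (a * b) = a * ℓ x b + ℓ x a * b)
    (hrep : ∀ (x y : L) (a : A), ℓ (m x y - m y x) a = ℓ x (ℓ y a) - ℓ y (ℓ x a))
    (hlA : ∀ (a : A) (x : L) (b : A), ℓ (a • x) b = a * ℓ x b)
    (hc1 : ∀ (x : L) (a : A) (y : L), m x (a • y) = ℓ x a • y + a • m x y)
    (hc2 : ∀ (a : A) (x y : L), m (a • x) y = a • m x y)
    -- N is a Nijenhuis operator: A-linear and satisfying the Nijenhuis identity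
    (hNA : ∀ (a : A) (x : L), N (a • x) = a • N x)
    (hN : ∀ x y : L,
      m (N x) (N y) - N (m x (N y)) - N (m (N x) y) + N (N (m x y)) = 0) :
    let p : L → L → L := fun x y => m x (N y) + m (N x) y - N (m x y)
    -- (L, ·_N) is left-symmetric
    ((∀ x y z : L, p (p x y) z - p x (p y z) = p (p y x) z - p y (p x z)) ∧
    -- ℓ_N takes values in derivations of A
    (∀ (x : L) (a b : A), ℓ (N x) (a * b) = a * ℓ (N x) b + ℓ (N x) a * b) ∧
    -- ℓ_N is a left representation of (L, ·_N) on A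
    (∀ (x y : L) (a : A),
      ℓ (N (p x y - p y x)) a = ℓ (N x) (ℓ (N y) a) - ℓ (N y) (ℓ (N x) a)) ∧
    -- ℓ_N (a • x) = a ℓ_N x
    (∀ (a : A) (x : L) (b : A), ℓ (N (a • x)) b = a * ℓ (N x) b) ∧
    -- compatibility conditions
    (∀ (x : L) (a : A) (y : L), p x (a • y) = ℓ (N x) a • y + a • p x y) ∧
    (∀ (a : A) (x y : L), p (a • x) y = a • p x y)) := by
  refine ⟨IsLeftSymmetric.deformedMul hls hN, fun x => hder (N x), fun x y a => ?_,
    fun a x b => by rw [hNA, hlA], deformedMul_smul_right hNA hc1, deformedMul_smul_left hNA hc2⟩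
  show ℓ (N (deformedMul m N x y - deformedMul m N y x)) a = _
  rw [map_sub, map_deformedMul hN, map_deformedMul hN]
  exact hrep (N x) (N y) a

/-- If `N` is a Nijenhuis operator on a left-symmetric Rinehart
algebra `(L, A, m, ℓ)`, then `(L, A, ·_N, ℓ_N)` with
`x ·_N y = x·N(y) + N(x)·y − N(x·y)` and `ℓ_N = ℓ ∘ N` is again a
left-symmetric Rinehart algebra. -/
theorem nijenhuis_deformed_leftSymmetricRinehart
    {K A L : Type*} [Field K] [CharZero K] [CommRing A] [Algebra K A]
    [AddCommGroup L] [Module K L] [Module A L] [IsScalarTower K A L]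
    (m : L →ₗ[K] L →ₗ[K] L) (ℓ : L →ₗ[K] A →ₗ[K] A) (N : L →ₗ[K] L)
    -- left-symmetric Rinehart axioms for (L, A, m, ℓ)
    (hls : ∀ x y z : L, m (m x y) z - m x (m y z) = m (m y x) z - m y (m x z))
    (hder : ∀ (x : L) (a b : A), ℓ x (a * b) = a * ℓ x b + ℓ x a * b)
    (hrep : ∀ (x y : L) (a : A), ℓ (m x y - m y x) a = ℓ x (ℓ y a) - ℓ y (ℓ x a))
    (hlA : ∀ (a : A) (x : L) (b : A), ℓ (a • x) b = a * ℓ x b)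
    (hc1 : ∀ (x : L) (a : A) (y : L), m x (a • y) = ℓ x a • y + a • m x y)
    (hc2 : ∀ (a : A) (x y : L), m (a • x) y = a • m x y)
    -- N is a Nijenhuis operator: A-linear and satisfying the Nijenhuis identity
    (hNA : ∀ (a : A) (x : L), N (a • x) = a • N x)
    (hN : ∀ x y : L,
      m (N x) (N y) - N (m x (N y)) - N (m (N x) y) + N (N (m x y)) = 0) :
    let p : L → L → L := fun x y => m x (N y) + m (N x) y - N (m x y)
    -- (L, ·_N) is left-symmetric
    ((∀ x y z : L, p (p x y) z - p x (p y z) = p (p y x) z - p y (p x z)) ∧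
    -- ℓ_N takes values in derivations of A
    (∀ (x : L) (a b : A), ℓ (N x) (a * b) = a * ℓ (N x) b + ℓ (N x) a * b) ∧
    -- ℓ_N is a left representation of (L, ·_N) on A
    (∀ (x y : L) (a : A),
      ℓ (N (p x y - p y x)) a = ℓ (N x) (ℓ (N y) a) - ℓ (N y) (ℓ (N x) a)) ∧
    -- ℓ_N (a • x) = a ℓ_N x
    (∀ (a : A) (x : L) (b : A), ℓ (N (a • x)) b = a * ℓ (N x) b) ∧
    -- compatibility conditions
    (∀ (x : L) (a : A) (y : L), p x (a • y) = ℓ (N x) a • y + a • p x y) ∧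
    (∀ (a : A) (x y : L), p (a • x) y = a • p x y)) :=
  nijenhuis_deformed_leftSymmetricRinehart_general m ℓ N hls hder hrep hlA hc1 hc2 hNA hN
end

section
/- Let (L,·) be a left-symmetric algebra with representation (M;ρ,μ), and T: M → L a linear map. Then T is an O-operator (i.e. T(u)·T(v) = T(ρ(T(u))(v) + μ(T(v))(u)) for all u,v ∈ M) if and only if the operator N_T on the semidirect product L⊕M given by N_T(x+m) = T(m) (matrix ((0,T),(0,0))) is a Nijenhuis operator on the semidirect product left-symmetric algebra, where (x₁+m₁)·'(x₂+m₂) = x₁·x₂ + ρ(x₁)m₂ + μ(x₂)m₁. -/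
/-!
The operator `N_T` kills `L` and lands in `L`, so `N_T ∘ N_T = 0` and the Nijenhuis torsion of `N_T`
at `(x₁, u), (x₂, v)` only sees `u` and `v`: it is `(T u · T v - T (ρ (T u) v + μ (T v) u), 0)`,
the defect of the O-operator identity.
-/

section Semidirect

variable {K L M : Type*} [CommRing K] [AddCommGroup L] [Module K L] [AddCommGroup M] [Module K M]

def semidirectMul (m : L →ₗ[K] L →ₗ[K] L) (ρ μ : L →ₗ[K] M →ₗ[K] M) (q r : L × M) : L × M :=
  (m q.1 r.1, ρ q.1 r.2 + μ r.1 q.2)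

def liftToSemidirect (T : M →ₗ[K] L) (q : L × M) : L × M :=
  (T q.2, 0)

def nijenhuisTorsion {A : Type*} [AddCommGroup A] (p : A → A → A) (N : A → A) (z w : A) : A :=
  p (N z) (N w) - N (p (N z) w) - N (p z (N w)) + N (N (p z w))

theorem nijenhuisTorsion_liftToSemidirect (m : L →ₗ[K] L →ₗ[K] L) (ρ μ : L →ₗ[K] M →ₗ[K] M)
    (T : M →ₗ[K] L) (z w : L × M) :
    nijenhuisTorsion (semidirectMul m ρ μ) (liftToSemidirect T) z w =
      (m (T z.2) (T w.2) - T (ρ (T z.2) w.2 + μ (T w.2) z.2), 0) := by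
  simp only [nijenhuisTorsion, semidirectMul, liftToSemidirect, map_zero, map_add, add_zero,
    zero_add, Prod.ext_iff, Prod.fst_add, Prod.snd_add, Prod.fst_sub, Prod.snd_sub, sub_zero,
    and_true]
  abel

theorem isOOperator_iff_nijenhuisTorsion_liftToSemidirect_eq_zero (m : L →ₗ[K] L →ₗ[K] L)
    (ρ μ : L →ₗ[K] M →ₗ[K] M) (T : M →ₗ[K] L) :
    (∀ u v : M, m (T u) (T v) = T (ρ (T u) v + μ (T v) u)) ↔
      ∀ z w : L × M, nijenhuisTorsion (semidirectMul m ρ μ) (liftToSemidirect T) z w = 0 := by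
  simp only [nijenhuisTorsion_liftToSemidirect, Prod.mk_eq_zero, sub_eq_zero, and_true]
  exact ⟨fun h z w => h z.2 w.2, fun h u v => h (0, u) (0, v)⟩

end Semidirect

theorem oOperator_iff_nijenhuis_semidirect_general {K L M : Type*} [Field K]
    [AddCommGroup L] [Module K L] [AddCommGroup M] [Module K M]
    (m : L →ₗ[K] L →ₗ[K] L) (ρ μ : L →ₗ[K] M →ₗ[K] M) (T : M →ₗ[K] L) :
    let p : L × M → L × M → L × M :=
      fun q r => (m q.1 r.1, ρ q.1 r.2 + μ r.1 q.2)
    let Nt : L × M → L × M := fun q => (T q.2, 0)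
    ((∀ u v : M, m (T u) (T v) = T (ρ (T u) v + μ (T v) u)) ↔
      (∀ z w : L × M,
        p (Nt z) (Nt w) - Nt (p (Nt z) w) - Nt (p z (Nt w)) + Nt (Nt (p z w))
          = 0)) :=
  isOOperator_iff_nijenhuisTorsion_liftToSemidirect_eq_zero m ρ μ T

/-- For a left-symmetric algebra `(L, m)` with representation
`(M; ρ, μ)` and a linear map `T : M → L`, `T` is an O-operator
(`T(u)·T(v) = T(ρ(T u) v + μ(T v) u)`) iff the operator
`N_T(x+m) = T m` is a Nijenhuis operator on the semidirect product
left-symmetric algebra `L ⊕ M`, with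
`(x₁+m₁)·'(x₂+m₂) = x₁·x₂ + ρ(x₁)m₂ + μ(x₂)m₁`. -/
theorem oOperator_iff_nijenhuis_semidirect {K L M : Type*} [Field K] [CharZero K]
    [AddCommGroup L] [Module K L] [AddCommGroup M] [Module K M]
    (m : L →ₗ[K] L →ₗ[K] L) (ρ μ : L →ₗ[K] M →ₗ[K] M) (T : M →ₗ[K] L)
    (hls : ∀ x y z : L, m (m x y) z - m x (m y z) = m (m y x) z - m y (m x z))
    (hρrep : ∀ (x y : L) (v : M), ρ (m x y - m y x) v = ρ x (ρ y v) - ρ y (ρ x v))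
    (hcompat : ∀ (x y : L) (v : M),
      ρ x (μ y v) - μ y (ρ x v) = μ (m x y) v - μ y (μ x v)) :
    let p : L × M → L × M → L × M :=
      fun q r => (m q.1 r.1, ρ q.1 r.2 + μ r.1 q.2)
    let Nt : L × M → L × M := fun q => (T q.2, 0)
    ((∀ u v : M, m (T u) (T v) = T (ρ (T u) v + μ (T v) u)) ↔
      (∀ z w : L × M,
        p (Nt z) (Nt w) - Nt (p (Nt z) w) - Nt (p z (Nt w)) + Nt (Nt (p z w))
          = 0)) :=
  oOperator_iff_nijenhuis_semidirect_general m ρ μ T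
end
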